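/- Let f : ℝ → ℝ be f(x) = -k x^(n/m) with k > 0 and m, n odd coprime positive integers, n < m, where x^(n/m) is the sign-preserving odd root power. Then f is continuous, f(0) = 0, x·f(x) < 0 for x ≠ 0, and every solution of ẋ = f(x) with x(0) = x₀ reaches 0 in time at most (m/(k(m-n))) |x₀|^((m-n)/m) and remains at 0 thereafter. -/

import Mathlib

/-- Sign-preserving odd real-root power: `oddPow x q = sign x * |x| ^ q`. -/
noncomputable def oddPow (x q : ℝ) : ℝ := Real.sign x * |x| ^ q

/-!
Zero is absorbing forward in time because `x * ẋ = -k |x| ^ (q + 1) ≤ 0`, so `x ^ 2` is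
nonincreasing along solutions. Away from zero, `|x| ^ (1 - q)` decreases at the constant rate
`k (1 - q)`, so it would become negative after time `|x₀| ^ (1 - q) / (k (1 - q))` if the
solution had not hit zero by then.
-/

open Real Set

lemma oddPow_zero (q : ℝ) : oddPow 0 q = 0 := by simp [oddPow]

lemma oddPow_neg (x q : ℝ) : oddPow (-x) q = -oddPow x q := by
  simp [oddPow, Real.sign_neg]

lemma oddPow_of_pos {x : ℝ} (hx : 0 < x) (q : ℝ) : oddPow x q = x ^ q := by
  simp [oddPow, sign_of_pos hx, abs_of_pos hx]

lemma oddPow_of_nonneg {x q : ℝ} (hq : q ≠ 0) (hx : 0 ≤ x) : oddPow x q = x ^ q := by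
  rcases hx.eq_or_lt with rfl | hx
  · rw [oddPow_zero, zero_rpow hq]
  · exact oddPow_of_pos hx q

lemma oddPow_of_nonpos {x q : ℝ} (hq : q ≠ 0) (hx : x ≤ 0) : oddPow x q = -(-x) ^ q := by
  rw [← oddPow_of_nonneg hq (neg_nonneg.2 hx), oddPow_neg, neg_neg]

lemma mul_oddPow (x q : ℝ) : x * oddPow x q = |x| * |x| ^ q := by
  rcases lt_trichotomy x 0 with hx | rfl | hx
  · simp [oddPow, sign_of_neg hx, abs_of_neg hx]
  · simp [oddPow_zero]
  · simp [oddPow, sign_of_pos hx, abs_of_pos hx]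

lemma mul_neg_mul_oddPow_nonpos {k : ℝ} (hk : 0 ≤ k) (x q : ℝ) : x * (-k * oddPow x q) ≤ 0 := by
  have : 0 ≤ x * oddPow x q := by rw [mul_oddPow]; positivity
  nlinarith

lemma mul_neg_mul_oddPow_neg {k x : ℝ} (hk : 0 < k) (hx : x ≠ 0) (q : ℝ) :
    x * (-k * oddPow x q) < 0 := by
  have : 0 < x * oddPow x q := by
    rw [mul_oddPow]
    exact mul_pos (abs_pos.2 hx) (rpow_pos_of_pos (abs_pos.2 hx) q)
  nlinarith

theorem continuous_oddPow {q : ℝ} (hq : 0 < q) : Continuous fun x => oddPow x q := by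
  have hpow : Continuous fun x : ℝ => x ^ q := continuous_id.rpow_const fun _ => Or.inr hq.le
  have hite : (fun x => oddPow x q) = fun x => if 0 ≤ x then x ^ q else -(-x) ^ q := by
    ext x
    split_ifs with hx
    · exact oddPow_of_nonneg hq.ne' hx
    · exact oddPow_of_nonpos hq.ne' (not_le.1 hx).le
  rw [hite]
  refine Continuous.if_le hpow (hpow.comp continuous_neg).neg continuous_const continuous_id ?_
  rintro x rfl
  simp [zero_rpow hq.ne']

section AutonomousFlow

variable {g x : ℝ → ℝ}

theorem antitoneOn_sq_of_mul_nonpos (hg : ∀ y, y * g y ≤ 0) (hx : Differentiable ℝ x)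
    (hode : ∀ t, 0 ≤ t → deriv x t = g (x t)) : AntitoneOn (fun t => x t ^ 2) (Ici 0) := by
  refine antitoneOn_of_deriv_nonpos (convex_Ici 0) (hx.continuous.pow 2).continuousOn
    (hx.pow 2).differentiableOn fun t ht => ?_
  rw [interior_Ici] at ht
  have hderiv : deriv (fun t => x t ^ 2) t = 2 * (x t * g (x t)) := by
    rw [deriv_fun_pow (hx t), hode t (le_of_lt ht)]
    ring
  rw [hderiv]
  linarith [hg (x t)]

theorem eq_zero_of_le_of_eq_zero (hg : ∀ y, y * g y ≤ 0) (hx : Differentiable ℝ x)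
    (hode : ∀ t, 0 ≤ t → deriv x t = g (x t)) {t₀ t : ℝ} (ht₀ : 0 ≤ t₀) (hzero : x t₀ = 0)
    (ht : t₀ ≤ t) : x t = 0 := by
  have hsq := antitoneOn_sq_of_mul_nonpos hg hx hode ht₀ (ht₀.trans ht) ht
  simp only [hzero] at hsq
  nlinarith [sq_nonneg (x t)]

end AutonomousFlow

section FractionalPowerFlow

variable {k q : ℝ} {x : ℝ → ℝ}

noncomputable def settlingTime (k q x₀ : ℝ) : ℝ := |x₀| ^ (1 - q) / (k * (1 - q))

lemma settlingTime_nonneg (hk : 0 < k) (hq1 : q < 1) (x₀ : ℝ) : 0 ≤ settlingTime k q x₀ :=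
  div_nonneg (rpow_nonneg (abs_nonneg x₀) _) (mul_pos hk (sub_pos.2 hq1)).le

lemma hasDerivAt_rpow_one_sub {t : ℝ} (hxt : 0 < x t) (hx : DifferentiableAt ℝ x t)
    (hode : deriv x t = -k * oddPow (x t) q) :
    HasDerivAt (fun s => x s ^ (1 - q)) (-(k * (1 - q))) t := by
  have hchain := (hasDerivAt_rpow_const (p := 1 - q) (Or.inl hxt.ne')).comp t hx.hasDerivAt
  refine hchain.congr_deriv ?_
  have hcancel : x t ^ (1 - q - 1) * x t ^ q = 1 := by
    rw [← rpow_add hxt]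
    norm_num
  rw [hode, oddPow_of_pos hxt]
  linear_combination (-(k * (1 - q))) * hcancel

theorem eq_zero_at_settlingTime (hk : 0 < k) (hq1 : q < 1) (hx : Differentiable ℝ x)
    (hode : ∀ t, 0 ≤ t → deriv x t = -k * oddPow (x t) q) (hx0 : 0 ≤ x 0) :
    x (settlingTime k q (x 0)) = 0 := by
  have hrate : 0 < k * (1 - q) := mul_pos hk (sub_pos.2 hq1)
  set T := settlingTime k q (x 0) with hT
  have hT0 : 0 ≤ T := settlingTime_nonneg hk hq1 _
  have hdecay : k * (1 - q) * T = x 0 ^ (1 - q) := by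
    rw [hT, settlingTime, abs_of_nonneg hx0]
    exact mul_div_cancel₀ _ hrate.ne'
  by_contra hxT
  have hne : ∀ s ∈ Icc 0 T, x s ≠ 0 := fun s hs hxs =>
    hxT (eq_zero_of_le_of_eq_zero (mul_neg_mul_oddPow_nonpos hk.le · q) hx hode hs.1 hxs hs.2)
  have hpos : ∀ s ∈ Icc 0 T, 0 < x s := by
    intro s hs
    by_contra! hxs
    obtain ⟨c, hc, hxc⟩ := intermediate_value_Icc' hs.1 hx.continuous.continuousOn ⟨hxs, hx0⟩
    exact hne c ⟨hc.1, hc.2.trans hs.2⟩ hxc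
  have hTpos : 0 < T :=
    pos_of_mul_pos_right (hdecay ▸ rpow_pos_of_pos (hpos 0 ⟨le_rfl, hT0⟩) _) hrate.le
  obtain ⟨-, -, hslope⟩ := exists_hasDerivAt_eq_slope (fun s => x s ^ (1 - q))
    (fun _ => -(k * (1 - q))) hTpos
    (fun s hs => ((hx s).continuousAt.rpow_const (Or.inl (hpos s hs).ne')).continuousWithinAt)
    fun s hs => hasDerivAt_rpow_one_sub (hpos s (Ioo_subset_Icc_self hs)) (hx s)
      (hode s hs.1.le)
  have hvanish : x T ^ (1 - q) = 0 := by
    rw [sub_zero, eq_div_iff hTpos.ne'] at hslope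
    linarith
  exact (rpow_pos_of_pos (hpos T ⟨hT0, le_rfl⟩) _).ne' hvanish

lemma deriv_neg_eq_neg_mul_oddPow (hode : ∀ t, 0 ≤ t → deriv x t = -k * oddPow (x t) q) :
    ∀ t, 0 ≤ t → deriv (-x) t = -k * oddPow ((-x) t) q := by
  intro t ht
  rw [deriv.neg, hode t ht, Pi.neg_apply, oddPow_neg]
  ring

theorem eq_zero_of_settlingTime_le (hk : 0 < k) (hq1 : q < 1) (hx : Differentiable ℝ x)
    (hode : ∀ t, 0 ≤ t → deriv x t = -k * oddPow (x t) q) {t : ℝ}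
    (ht : settlingTime k q (x 0) ≤ t) : x t = 0 := by
  wlog hx0 : 0 ≤ x 0 generalizing x
  · have hneg := this hx.neg (deriv_neg_eq_neg_mul_oddPow hode) (by simpa [settlingTime] using ht)
      (by simp only [Pi.neg_apply]; linarith)
    simpa using hneg
  exact eq_zero_of_le_of_eq_zero (mul_neg_mul_oddPow_nonpos hk.le · q) hx hode
    (settlingTime_nonneg hk hq1 _) (eq_zero_at_settlingTime hk hq1 hx hode hx0) ht

end FractionalPowerFlow

theorem fractional_power_finite_time_stability_general
    (k : ℝ) (m n : ℤ) (hk : 0 < k)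
    (hn : 0 < n) (hnm : n < m) :
    let f : ℝ → ℝ := fun x => -k * oddPow x ((n : ℝ) / (m : ℝ))
    Continuous f ∧ f 0 = 0 ∧ (∀ x : ℝ, x ≠ 0 → x * f x < 0) ∧
    (∀ (x : ℝ → ℝ) (x₀ : ℝ), Differentiable ℝ x →
      (∀ t : ℝ, 0 ≤ t → deriv x t = f (x t)) → x 0 = x₀ →
      ∀ t : ℝ, ((m : ℝ) / (k * ((m : ℝ) - (n : ℝ)))) * |x₀| ^ (((m : ℝ) - (n : ℝ)) / (m : ℝ)) ≤ t →
        x t = 0) := by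
  intro f
  have hm : (0 : ℝ) < m := by exact_mod_cast hn.trans hnm
  have hq : 0 < (n : ℝ) / m := div_pos (by exact_mod_cast hn) hm
  have hq1 : (n : ℝ) / m < 1 := (div_lt_one hm).2 (by exact_mod_cast hnm)
  refine ⟨continuous_const.mul (continuous_oddPow hq), by simp [f, oddPow_zero],
    fun y hy => mul_neg_mul_oddPow_neg hk hy _, ?_⟩
  rintro x x₀ hx hode rfl t ht
  refine eq_zero_of_settlingTime_le hk hq1 hx hode (le_of_eq_of_le ?_ ht)
  have hexp : 1 - (n : ℝ) / m = (m - n) / m := by field_simp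
  rw [settlingTime, hexp]
  field_simp

theorem fractional_power_finite_time_stability
    (k : ℝ) (m n : ℤ) (hk : 0 < k)
    (hmodd : Odd m) (hnodd : Odd n) (hcop : IsCoprime m n)
    (hn : 0 < n) (hnm : n < m) :
    let f : ℝ → ℝ := fun x => -k * oddPow x ((n : ℝ) / (m : ℝ))
    Continuous f ∧ f 0 = 0 ∧ (∀ x : ℝ, x ≠ 0 → x * f x < 0) ∧
    (∀ (x : ℝ → ℝ) (x₀ : ℝ), Differentiable ℝ x →
      (∀ t : ℝ, 0 ≤ t → deriv x t = f (x t)) → x 0 = x₀ →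
      ∀ t : ℝ, ((m : ℝ) / (k * ((m : ℝ) - (n : ℝ)))) * |x₀| ^ (((m : ℝ) - (n : ℝ)) / (m : ℝ)) ≤ t →
        x t = 0) :=
  fractional_power_finite_time_stability_general k m n hk hn hnm
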